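/- Fix positive integers $I,J,K,L,N$, parameters $U \in \mathbb{R}^{K\times I}$, $V \in \mathbb{R}^{L\times J}$, $B \in \mathbb{R}^{I\times J}$, $C \in \mathbb{R}^{K\times L}$, training data $X_1,\dots,X_N \in \{0,1\}^{I\times J}$, the energy $E(X,Y) = -\mathrm{tr}(U^T Y V X^T) - \mathrm{tr}(X^T B) - \mathrm{tr}(Y^T C)$, and the log-likelihood $\ell = \frac{1}{N}\sum_{n=1}^N \log\big(\sum_{Y} e^{-E(X_n,Y)}\big) - \log\big(\sum_{X',Y'} e^{-E(X',Y')}\big)$ viewed as a function of the weight entry $v_{l_0 j_0}$. Then, with $\sigma$ applied entrywise and $p(X) = \sum_{Y} e^{-E(X,Y)} / \sum_{X',Y'} e^{-E(X',Y')}$, $\frac{\partial \ell}{\partial v_{l_0 j_0}} = \frac{1}{N}\sum_{n=1}^N \big(\sigma(U X_n V^T + C)^T\, U\, X_n\big)_{l_0 j_0} - \sum_{X \in \{0,1\}^{I\times J}} p(X) \big(\sigma(U X V^T + C)^T\, U\, X\big)_{l_0 j_0}$, where $\sigma(x)=1/(1+e^{-x})$. -/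

import Mathlib

open Matrix Finset Real

noncomputable section

def toR {m n : Type*} (b : Matrix m n Bool) : Matrix m n ℝ :=
  Matrix.of fun i j => if b i j then (1 : ℝ) else 0

def sig (x : ℝ) : ℝ := 1 / (1 + Real.exp (-x))

def sigM {m n : Type*} (M : Matrix m n ℝ) : Matrix m n ℝ :=
  Matrix.of fun i j => sig (M i j)

def mvrbmEnergy {I J K L : ℕ} (U : Matrix (Fin K) (Fin I) ℝ) (V : Matrix (Fin L) (Fin J) ℝ)
    (B : Matrix (Fin I) (Fin J) ℝ) (C : Matrix (Fin K) (Fin L) ℝ)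
    (X : Matrix (Fin I) (Fin J) ℝ) (Y : Matrix (Fin K) (Fin L) ℝ) : ℝ :=
  -(Uᵀ * Y * V * Xᵀ).trace - (Xᵀ * B).trace - (Yᵀ * C).trace

/-! The energy is affine in each weight `v_{lj}`, with slope `(Yᵀ U X)_{lj}`, so the derivative
of each log-partition function is the Gibbs expectation of `(Yᵀ U X)_{lj}`. Given `X`, the
expectation of a hidden bit `Y_{kl}` is `σ((U X Vᵀ + C)_{kl})`: pairing every `Y` with the
configuration in which the bit `Y_{kl}` is flipped changes the exponent `tr(Yᵀ (U X Vᵀ + C))` by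
exactly `±(U X Vᵀ + C)_{kl}`. -/

section FlipEntry

variable {m n : Type*} [DecidableEq m] [DecidableEq n]

def flipEntry (k : m) (l : n) (Y : Matrix m n Bool) : Matrix m n Bool :=
  Matrix.of fun a b => if a = k ∧ b = l then !Y a b else Y a b

lemma flipEntry_involutive (k : m) (l : n) : Function.Involutive (flipEntry k l) := by
  intro Y
  ext a b
  by_cases h : a = k ∧ b = l <;> simp [flipEntry, h]

lemma toR_flipEntry (k : m) (l : n) (Y : Matrix m n Bool) :
    toR (flipEntry k l Y) = toR Y + (if Y k l then -1 else 1 : ℝ) • single k l 1 := by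
  ext a b
  by_cases h : a = k ∧ b = l
  · obtain ⟨rfl, rfl⟩ := h
    cases hY : Y a b <;> norm_num [toR, flipEntry, hY]
  · have hne : ¬(k = a ∧ l = b) := fun h' => h ⟨h'.1.symm, h'.2.symm⟩
    split_ifs <;> simp [toR, flipEntry, h, single_apply_of_ne (h := hne)]

variable [Fintype m] [Fintype n]

lemma trace_transpose_toR_flipEntry_mul (k : m) (l : n) (Y : Matrix m n Bool)
    (M : Matrix m n ℝ) :
    ((toR (flipEntry k l Y))ᵀ * M).trace
      = ((toR Y)ᵀ * M).trace + (if Y k l then -1 else 1 : ℝ) * M k l := by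
  rw [toR_flipEntry, transpose_add, Matrix.add_mul, trace_add, transpose_smul, Matrix.smul_mul,
    trace_smul, transpose_single, trace_single_mul]
  simp

end FlipEntry

lemma sig_mul_one_add_exp_neg (x : ℝ) : sig x * (1 + exp (-x)) = 1 := by
  rw [sig, one_div, inv_mul_cancel₀ (by positivity)]

lemma sig_mul_one_add_exp (x : ℝ) : sig x * (1 + exp x) = exp x := by
  rw [sig]
  field_simp
  rw [add_mul, ← exp_add]
  simp [add_comm]

section HiddenExpectation

variable {m n : Type*} [Fintype m] [Fintype n] [DecidableEq m] [DecidableEq n]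

lemma toR_apply_mul_exp_add_flipEntry (M : Matrix m n ℝ) (k : m) (l : n) (Y : Matrix m n Bool) :
    toR Y k l * exp ((toR Y)ᵀ * M).trace
        + toR (flipEntry k l Y) k l * exp ((toR (flipEntry k l Y))ᵀ * M).trace
      = sig (M k l) * (exp ((toR Y)ᵀ * M).trace
        + exp ((toR (flipEntry k l Y))ᵀ * M).trace) := by
  have hflip : toR (flipEntry k l Y) k l = 1 - toR Y k l := by
    cases hY : Y k l <;> simp [toR, flipEntry, hY]
  rw [trace_transpose_toR_flipEntry_mul, exp_add, hflip]
  cases hY : Y k l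
  · rw [show toR Y k l = 0 by simp [toR, hY]]
    simp only [Bool.false_eq_true, if_false, one_mul]
    linear_combination exp ((toR Y)ᵀ * M).trace * (sig_mul_one_add_exp (M k l)).symm
  · rw [show toR Y k l = 1 by simp [toR, hY]]
    simp only [if_true, neg_one_mul]
    linear_combination exp ((toR Y)ᵀ * M).trace * (sig_mul_one_add_exp_neg (M k l)).symm

lemma sum_toR_apply_mul_exp (M : Matrix m n ℝ) (k : m) (l : n) :
    ∑ Y : Matrix m n Bool, toR Y k l * exp ((toR Y)ᵀ * M).trace
      = sig (M k l) * ∑ Y : Matrix m n Bool, exp ((toR Y)ᵀ * M).trace := by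
  have hflip (f : Matrix m n Bool → ℝ) : ∑ Y, f (flipEntry k l Y) = ∑ Y, f Y :=
    Fintype.sum_bijective _ (flipEntry_involutive k l).bijective _ _ fun _ => rfl
  have hpairs := Finset.sum_congr rfl fun Y (_ : Y ∈ univ) =>
    toR_apply_mul_exp_add_flipEntry M k l Y
  rw [sum_add_distrib, ← mul_sum, sum_add_distrib,
    hflip fun Y => toR Y k l * exp ((toR Y)ᵀ * M).trace,
    hflip fun Y => exp ((toR Y)ᵀ * M).trace] at hpairs
  linarith

lemma sum_transpose_toR_mul_apply_mul_exp {p : Type*} [Fintype p] (M : Matrix m n ℝ)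
    (A : Matrix m p ℝ) (l : n) (j : p) :
    ∑ Y : Matrix m n Bool, ((toR Y)ᵀ * A) l j * exp ((toR Y)ᵀ * M).trace
      = ((sigM M)ᵀ * A) l j * ∑ Y : Matrix m n Bool, exp ((toR Y)ᵀ * M).trace := by
  simp only [mul_apply, transpose_apply, sum_mul]
  rw [sum_comm]
  refine sum_congr rfl fun k _ => ?_
  calc ∑ Y : Matrix m n Bool, toR Y k l * A k j * exp ((toR Y)ᵀ * M).trace
      = A k j * ∑ Y : Matrix m n Bool, toR Y k l * exp ((toR Y)ᵀ * M).trace := by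
        rw [mul_sum]; exact sum_congr rfl fun _ _ => by ring
    _ = sigM M k l * A k j * ∑ Y : Matrix m n Bool, exp ((toR Y)ᵀ * M).trace := by
        rw [sum_toR_apply_mul_exp, sigM, of_apply]; ring

end HiddenExpectation

lemma of_ite_eq_add_smul_single {m n α : Type*} [DecidableEq m] [DecidableEq n] [Ring α]
    (V : Matrix m n α) (l₀ : m) (j₀ : n) (t : α) :
    (Matrix.of fun l j => if l = l₀ ∧ j = j₀ then t else V l j)
      = V + (t - V l₀ j₀) • single l₀ j₀ 1 := by
  ext l j
  by_cases h : l = l₀ ∧ j = j₀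
  · obtain ⟨rfl, rfl⟩ := h
    simp
  · have hne : ¬(l₀ = l ∧ j₀ = j) := fun h' => h ⟨h'.1.symm, h'.2.symm⟩
    simp [h, single_apply_of_ne (h := hne)]

section MVRBM

variable {I J K L : ℕ} (U : Matrix (Fin K) (Fin I) ℝ) (V : Matrix (Fin L) (Fin J) ℝ)
  (B : Matrix (Fin I) (Fin J) ℝ) (C : Matrix (Fin K) (Fin L) ℝ)

lemma neg_mvrbmEnergy (X : Matrix (Fin I) (Fin J) ℝ) (Y : Matrix (Fin K) (Fin L) ℝ) :
    -mvrbmEnergy U V B C X Y = (Xᵀ * B).trace + (Yᵀ * (U * X * Vᵀ + C)).trace := by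
  have hcyc : (Uᵀ * Y * V * Xᵀ).trace = (Yᵀ * (U * X * Vᵀ)).trace :=
    calc (Uᵀ * Y * V * Xᵀ).trace = (X * Vᵀ * (Yᵀ * U)).trace := by
          rw [← trace_transpose]; simp only [transpose_mul, transpose_transpose, Matrix.mul_assoc]
      _ = (Yᵀ * (U * X * Vᵀ)).trace := by rw [trace_mul_comm]; simp only [Matrix.mul_assoc]
  rw [mvrbmEnergy, Matrix.mul_add, trace_add, hcyc]
  ring

lemma neg_mvrbmEnergy_add_smul_single (X : Matrix (Fin I) (Fin J) ℝ)
    (Y : Matrix (Fin K) (Fin L) ℝ) (l : Fin L) (j : Fin J) (s : ℝ) :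
    -mvrbmEnergy U (V + s • single l j 1) B C X Y
      = -mvrbmEnergy U V B C X Y + s * (Yᵀ * U * X) l j := by
  have hsingle : (Uᵀ * Y * single l j (1 : ℝ) * Xᵀ).trace = (Yᵀ * U * X) l j := by
    rw [trace_mul_comm, ← Matrix.mul_assoc, trace_mul_single, ← transpose_transpose (Yᵀ * U * X)]
    simp [transpose_mul, Matrix.mul_assoc]
  simp only [mvrbmEnergy, Matrix.mul_add, Matrix.add_mul, Matrix.mul_smul, Matrix.smul_mul,
    trace_add, trace_smul, hsingle, smul_eq_mul]
  ring

def mvrbmVisibleWeight (X : Matrix (Fin I) (Fin J) Bool) : ℝ :=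
  ∑ Y : Matrix (Fin K) (Fin L) Bool, exp (-mvrbmEnergy U V B C (toR X) (toR Y))

lemma mvrbmVisibleWeight_pos (X : Matrix (Fin I) (Fin J) Bool) :
    0 < mvrbmVisibleWeight U V B C X :=
  sum_pos (fun _ _ => exp_pos _) univ_nonempty

lemma sum_mul_exp_neg_mvrbmEnergy (X : Matrix (Fin I) (Fin J) Bool) (l : Fin L) (j : Fin J) :
    ∑ Y : Matrix (Fin K) (Fin L) Bool,
        ((toR Y)ᵀ * U * toR X) l j * exp (-mvrbmEnergy U V B C (toR X) (toR Y))
      = ((sigM (U * toR X * Vᵀ + C))ᵀ * U * toR X) l j * mvrbmVisibleWeight U V B C X := by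
  simp only [mvrbmVisibleWeight, neg_mvrbmEnergy, exp_add, Matrix.mul_assoc _ U, ← mul_sum,
    mul_left_comm _ (exp ((toR X)ᵀ * B).trace)]
  rw [sum_transpose_toR_mul_apply_mul_exp]

lemma hasDerivAt_mvrbmVisibleWeight (X : Matrix (Fin I) (Fin J) Bool) (l : Fin L) (j : Fin J) :
    HasDerivAt (fun t => mvrbmVisibleWeight U (V + (t - V l j) • single l j 1) B C X)
      (((sigM (U * toR X * Vᵀ + C))ᵀ * U * toR X) l j * mvrbmVisibleWeight U V B C X)
      (V l j) := by
  rw [← sum_mul_exp_neg_mvrbmEnergy]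
  refine HasDerivAt.fun_sum fun Y _ => ?_
  simp only [neg_mvrbmEnergy_add_smul_single]
  simpa [mul_comm] using
    ((((hasDerivAt_id (V l j)).sub_const (V l j)).mul_const
      (((toR Y)ᵀ * U * toR X) l j)).const_add (-mvrbmEnergy U V B C (toR X) (toR Y))).exp

lemma hasDerivAt_log_mvrbmVisibleWeight (X : Matrix (Fin I) (Fin J) Bool) (l : Fin L)
    (j : Fin J) :
    HasDerivAt (fun t => log (mvrbmVisibleWeight U (V + (t - V l j) • single l j 1) B C X))
      (((sigM (U * toR X * Vᵀ + C))ᵀ * U * toR X) l j) (V l j) := by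
  have hpos := (mvrbmVisibleWeight_pos U V B C X).ne'
  have hlog := (hasDerivAt_mvrbmVisibleWeight U V B C X l j).log (by simpa using hpos)
  simpa only [sub_self, zero_smul, add_zero, mul_div_cancel_right₀ _ hpos] using hlog

lemma hasDerivAt_log_sum_mvrbmVisibleWeight (l : Fin L) (j : Fin J) :
    HasDerivAt
      (fun t => log (∑ X, mvrbmVisibleWeight U (V + (t - V l j) • single l j 1) B C X))
      (∑ X, mvrbmVisibleWeight U V B C X / (∑ X', mvrbmVisibleWeight U V B C X')
        * ((sigM (U * toR X * Vᵀ + C))ᵀ * U * toR X) l j) (V l j) := by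
  have hpos := (sum_pos (fun X _ => mvrbmVisibleWeight_pos U V B C X) univ_nonempty).ne'
  have hlog := (HasDerivAt.fun_sum fun X _ =>
    hasDerivAt_mvrbmVisibleWeight U V B C X l j).log (by simpa using hpos)
  simp only [sub_self, zero_smul, add_zero] at hlog
  convert hlog using 1
  rw [sum_div]
  exact sum_congr rfl fun X _ => by ring

end MVRBM

theorem mvrbm_loglik_derivative_V_general {I J K L N : ℕ}
    (U : Matrix (Fin K) (Fin I) ℝ) (V : Matrix (Fin L) (Fin J) ℝ)
    (B : Matrix (Fin I) (Fin J) ℝ) (C : Matrix (Fin K) (Fin L) ℝ)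
    (Xs : Fin N → Matrix (Fin I) (Fin J) Bool) (l₀ : Fin L) (j₀ : Fin J)
    -- `Vv t` is `V` with the single entry `v_{l₀j₀}` replaced by `t`
    (Vv : ℝ → Matrix (Fin L) (Fin J) ℝ)
    (hVv : ∀ t, Vv t = Matrix.of fun l j => if l = l₀ ∧ j = j₀ then t else V l j)
    -- the marginal distribution `p(X)` of the visible matrix
    (p : Matrix (Fin I) (Fin J) Bool → ℝ)
    (hp : ∀ X, p X =
      (∑ Y : Matrix (Fin K) (Fin L) Bool,
          Real.exp (-(mvrbmEnergy U V B C (toR X) (toR Y)))) /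
        ∑ X' : Matrix (Fin I) (Fin J) Bool, ∑ Y' : Matrix (Fin K) (Fin L) Bool,
          Real.exp (-(mvrbmEnergy U V B C (toR X') (toR Y')))) :
    deriv (fun t : ℝ =>
        (1 / (N : ℝ)) * ∑ n : Fin N,
            Real.log (∑ Y : Matrix (Fin K) (Fin L) Bool,
              Real.exp (-(mvrbmEnergy U (Vv t) B C (toR (Xs n)) (toR Y))))
          - Real.log (∑ X' : Matrix (Fin I) (Fin J) Bool,
              ∑ Y' : Matrix (Fin K) (Fin L) Bool,
                Real.exp (-(mvrbmEnergy U (Vv t) B C (toR X') (toR Y'))))) (V l₀ j₀)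
      = (1 / (N : ℝ)) * ∑ n : Fin N,
            ((sigM (U * toR (Xs n) * Vᵀ + C))ᵀ * U * toR (Xs n)) l₀ j₀
        - ∑ X : Matrix (Fin I) (Fin J) Bool,
            p X * ((sigM (U * toR X * Vᵀ + C))ᵀ * U * toR X) l₀ j₀ := by
  have hVv' : Vv = fun t => V + (t - V l₀ j₀) • single l₀ j₀ 1 :=
    funext fun t => (hVv t).trans (of_ite_eq_add_smul_single V l₀ j₀ t)
  subst hVv'
  have hp' : p = fun X => mvrbmVisibleWeight U V B C X / ∑ X', mvrbmVisibleWeight U V B C X' :=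
    funext hp
  subst hp'
  exact (((HasDerivAt.fun_sum (u := univ) fun n _ =>
    hasDerivAt_log_mvrbmVisibleWeight U V B C (Xs n) l₀ j₀).const_mul (1 / (N : ℝ))).fun_sub
    (hasDerivAt_log_sum_mvrbmVisibleWeight U V B C l₀ j₀)).deriv

/-- the derivative of the log-likelihood with respect to the weight entry
`v_{l₀j₀}` equals
`(1/N) ∑_n (σ(U Xₙ Vᵀ + C)ᵀ U Xₙ)_{l₀j₀} - ∑_X p(X) (σ(U X Vᵀ + C)ᵀ U X)_{l₀j₀}`. -/
theorem mvrbm_loglik_derivative_V {I J K L N : ℕ}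
    (hI : 0 < I) (hJ : 0 < J) (hK : 0 < K) (hL : 0 < L) (hN : 0 < N)
    (U : Matrix (Fin K) (Fin I) ℝ) (V : Matrix (Fin L) (Fin J) ℝ)
    (B : Matrix (Fin I) (Fin J) ℝ) (C : Matrix (Fin K) (Fin L) ℝ)
    (Xs : Fin N → Matrix (Fin I) (Fin J) Bool) (l₀ : Fin L) (j₀ : Fin J)
    -- `Vv t` is `V` with the single entry `v_{l₀j₀}` replaced by `t`
    (Vv : ℝ → Matrix (Fin L) (Fin J) ℝ)
    (hVv : ∀ t, Vv t = Matrix.of fun l j => if l = l₀ ∧ j = j₀ then t else V l j)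
    -- the marginal distribution `p(X)` of the visible matrix
    (p : Matrix (Fin I) (Fin J) Bool → ℝ)
    (hp : ∀ X, p X =
      (∑ Y : Matrix (Fin K) (Fin L) Bool,
          Real.exp (-(mvrbmEnergy U V B C (toR X) (toR Y)))) /
        ∑ X' : Matrix (Fin I) (Fin J) Bool, ∑ Y' : Matrix (Fin K) (Fin L) Bool,
          Real.exp (-(mvrbmEnergy U V B C (toR X') (toR Y')))) :
    deriv (fun t : ℝ =>
        (1 / (N : ℝ)) * ∑ n : Fin N,
            Real.log (∑ Y : Matrix (Fin K) (Fin L) Bool,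
              Real.exp (-(mvrbmEnergy U (Vv t) B C (toR (Xs n)) (toR Y))))
          - Real.log (∑ X' : Matrix (Fin I) (Fin J) Bool,
              ∑ Y' : Matrix (Fin K) (Fin L) Bool,
                Real.exp (-(mvrbmEnergy U (Vv t) B C (toR X') (toR Y'))))) (V l₀ j₀)
      = (1 / (N : ℝ)) * ∑ n : Fin N,
            ((sigM (U * toR (Xs n) * Vᵀ + C))ᵀ * U * toR (Xs n)) l₀ j₀
        - ∑ X : Matrix (Fin I) (Fin J) Bool,
            p X * ((sigM (U * toR X * Vᵀ + C))ᵀ * U * toR X) l₀ j₀ :=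
  mvrbm_loglik_derivative_V_general U V B C Xs l₀ j₀ Vv hVv p hp
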